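/- Assume conditions (A1), (A2) and (A3). Then for every t > 0, ∫_t^∞ F(c(u)) du = ∫₀^∞ F(v_s(c(t))) ds = ∫₀^{c(t)} F(r)/ψ(r) dr, and all three quantities are finite. (Probabilistically, this is the identity P(A ≤ t) = E[e^{−c(t) Z₀}] for the time A to the most recent common ancestor of the stationary CBI-population Z₀.) -/

import Mathlib

open MeasureTheory Real Set Filter

/-- The (sub)-critical branching mechanism
`ψ(z) = b z + σ z² + ∫₀^∞ (e^{−z u} − 1 + z u) m(du)`. -/
noncomputable def psi (b σ : ℝ) (m : Measure ℝ) (z : ℝ) : ℝ :=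
  b * z + σ * z ^ 2 + ∫ u in Ioi (0 : ℝ), (Real.exp (-(z * u)) - 1 + z * u) ∂m

/-- Condition (A3): either `σ > 0` or `∫₀^1 u m(du) = ∞`. -/
def condA3 (σ : ℝ) (m : Measure ℝ) : Prop :=
  0 < σ ∨ ∫⁻ u in Ioc (0 : ℝ) 1, ENNReal.ofReal u ∂m = ⊤

/-- `v t λ ∈ (0, λ]` is the unique solution of `∫_{v_t(λ)}^{λ} dz/ψ(z) = t`
(the cumulant semigroup). -/
def IsCumulant (b σ : ℝ) (m : Measure ℝ) (v : ℝ → ℝ → ℝ) : Prop :=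
  ∀ lam > (0 : ℝ), ∀ t ≥ (0 : ℝ),
    v t lam ∈ Ioc 0 lam ∧ ∫ z in (v t lam)..lam, (psi b σ m z)⁻¹ = t

/-- The immigration mechanism `F(z) = β z + ∫₀^∞ (1 − e^{−z u}) n(du)`. -/
noncomputable def Fim (β : ℝ) (n : Measure ℝ) (z : ℝ) : ℝ :=
  β * z + ∫ u in Ioi (0 : ℝ), (1 - Real.exp (-(z * u))) ∂n

/-- Condition (A2): `∫₀^λ F(z)/ψ(z) dz < ∞` for some `λ > 0`. -/
def condA2 (b σ β : ℝ) (m n : Measure ℝ) : Prop :=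
  ∃ lam > (0 : ℝ), IntegrableOn (fun z => Fim β n z / psi b σ m z) (Ioo 0 lam)

/-- Under (A1) and (A3), `c(t) ∈ (0,∞)` is defined by `∫_{c(t)}^∞ dz/ψ(z) = t`. -/
def IsExtinctionRate (b σ : ℝ) (m : Measure ℝ) (c : ℝ → ℝ) : Prop :=
  ∀ t > (0 : ℝ), 0 < c t ∧ ∫ z in Ioi (c t), (psi b σ m z)⁻¹ = t

/-!
Outside the degenerate case `ψ ≡ 0` (excluded by the defining relation of `c`), `ψ` is positive
and continuous on `(0, ∞)`. Hence `r ↦ ∫_r^{c(t)} dz/ψ(z)` is a strictly decreasing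
differentiable bijection of `(0, c(t))` onto `(0, ∞)` with inverse `s ↦ v_s(c(t))`, and the
substitution `s = ∫_r^{c(t)} dz/ψ(z)` gives the second identity together with the finiteness
transfer from `∫_0^{c(t)} F/ψ` (finite by (A2) near `0` and by continuity away from `0`).
Since `v_s(c(t))` and `c(t + s)` both have tail integral `t + s` of `1/ψ`, they coincide, and
the shift `u = t + s` gives the first identity.
-/

lemma exp_neg_sub_one_add_le_sq {x : ℝ} (hx : 0 ≤ x) : exp (-x) - 1 + x ≤ x ^ 2 := by
  rcases le_total x 1 with h | h
  · have := abs_exp_sub_one_sub_id_le (x := -x) (by rw [abs_neg, abs_of_nonneg hx]; exact h)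
    rw [neg_sq] at this
    linarith [le_abs_self (exp (-x) - 1 - -x)]
  · have : exp (-x) ≤ 1 := exp_le_one_iff.mpr (by linarith)
    nlinarith

lemma psi_kernel_nonneg (x : ℝ) : 0 ≤ exp (-x) - 1 + x := by
  linarith [add_one_le_exp (-x)]

lemma psi_kernel_le {z u : ℝ} (hz : 0 ≤ z) (hu : 0 < u) :
    exp (-(z * u)) - 1 + z * u ≤ (z + z ^ 2) * min u (u ^ 2) := by
  rcases le_total u 1 with h | h
  · rw [min_eq_right (by nlinarith)]
    nlinarith [exp_neg_sub_one_add_le_sq (mul_nonneg hz hu.le)]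
  · rw [min_eq_left (by nlinarith)]
    have : exp (-(z * u)) ≤ 1 := exp_le_one_iff.mpr (by nlinarith)
    nlinarith

lemma Fim_kernel_nonneg {x : ℝ} (hx : 0 ≤ x) : 0 ≤ 1 - exp (-x) := by
  linarith [exp_le_one_iff.mpr (neg_nonpos.mpr hx)]

lemma Fim_kernel_le {z u : ℝ} (hz : 0 ≤ z) (hu : 0 < u) :
    1 - exp (-(z * u)) ≤ (1 + z) * min 1 u := by
  rcases le_total u 1 with h | h
  · rw [min_eq_right h]
    nlinarith [add_one_le_exp (-(z * u))]
  · rw [min_eq_left h]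
    nlinarith [exp_pos (-(z * u))]

lemma continuousOn_integral_of_locally_dominated {μ : Measure ℝ} {k : ℝ → ℝ → ℝ}
    (hk : Continuous (Function.uncurry k))
    (hdom : ∀ N > 0, ∃ g : ℝ → ℝ, Integrable g μ ∧
      ∀ z ∈ Ioo 0 N, ∀ᵐ u ∂μ, |k z u| ≤ g u) :
    ContinuousOn (fun z => ∫ u, k z u ∂μ) (Ioi 0) := by
  intro z hz
  obtain ⟨g, hg, hbound⟩ := hdom (z + 1) (by linarith [mem_Ioi.mp hz])
  have hIoo : ContinuousOn (fun z => ∫ u, k z u ∂μ) (Ioo 0 (z + 1)) :=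
    continuousOn_of_dominated
      (fun z _ => (hk.comp (Continuous.prodMk_right z)).aestronglyMeasurable) hbound hg
      (ae_of_all _ fun u => (hk.comp (Continuous.prodMk_left u)).continuousOn)
  exact (hIoo.continuousAt (Ioo_mem_nhds hz (by linarith))).continuousWithinAt

section Mechanisms

variable {b σ β : ℝ} {m n : Measure ℝ}

lemma continuousOn_psi (hm : IntegrableOn (fun u => min u (u ^ 2)) (Ioi 0) m) :
    ContinuousOn (psi b σ m) (Ioi 0) := by
  refine (Continuous.continuousOn (by fun_prop)).add
    (continuousOn_integral_of_locally_dominated (k := fun z u => exp (-(z * u)) - 1 + z * u)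
      (by fun_prop) fun N _ => ⟨_, hm.const_mul (N + N ^ 2), fun z hz => ?_⟩)
  filter_upwards [ae_restrict_mem measurableSet_Ioi] with u hu
  rw [abs_of_nonneg (psi_kernel_nonneg _)]
  refine (psi_kernel_le hz.1.le hu).trans
    (mul_le_mul_of_nonneg_right ?_ (le_min hu.le (sq_nonneg u)))
  nlinarith [hz.1, hz.2]

lemma continuousOn_Fim (hn : IntegrableOn (fun u => min 1 u) (Ioi 0) n) :
    ContinuousOn (Fim β n) (Ioi 0) := by
  refine (Continuous.continuousOn (by fun_prop)).add
    (continuousOn_integral_of_locally_dominated (k := fun z u => 1 - exp (-(z * u)))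
      (by fun_prop) fun N _ => ⟨_, hn.const_mul (1 + N), fun z hz => ?_⟩)
  filter_upwards [ae_restrict_mem measurableSet_Ioi] with u hu
  rw [abs_of_nonneg (Fim_kernel_nonneg (mul_nonneg hz.1.le hu.le))]
  refine (Fim_kernel_le hz.1.le hu).trans
    (mul_le_mul_of_nonneg_right ?_ (le_min zero_le_one hu.le))
  linarith [hz.2]

/-- If `ψ(z) = 0` at some `z > 0`, then `b = σ = 0` and `m = 0` on `(0, ∞)` (where the integrand
of `ψ` is positive), so `ψ ≡ 0`. -/
lemma psi_pos (hb : 0 ≤ b) (hσ : 0 ≤ σ) (hm : IntegrableOn (fun u => min u (u ^ 2)) (Ioi 0) m)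
    (hψ : psi b σ m ≠ 0) {z : ℝ} (hz : 0 < z) : 0 < psi b σ m z := by
  set k : ℝ → ℝ := fun u => exp (-(z * u)) - 1 + z * u
  have hk_int : IntegrableOn k (Ioi 0) m :=
    (hm.const_mul (z + z ^ 2)).mono' (by fun_prop) <| by
      filter_upwards [ae_restrict_mem measurableSet_Ioi] with u hu
      rw [Real.norm_eq_abs, abs_of_nonneg (psi_kernel_nonneg _)]
      exact psi_kernel_le hz.le hu
  have hI : 0 ≤ ∫ u in Ioi 0, k u ∂m :=
    setIntegral_nonneg measurableSet_Ioi fun u _ => psi_kernel_nonneg _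
  refine lt_of_le_of_ne (by unfold psi; positivity) fun h0 => hψ ?_
  have hb0 : b = 0 := by unfold psi at h0; nlinarith
  have hσ0 : σ = 0 := by unfold psi at h0; nlinarith [pow_pos hz 2]
  have hIz : ∫ u in Ioi 0, k u ∂m = 0 := by
    unfold psi at h0
    rw [hb0, hσ0] at h0
    linarith
  have hm0 : m.restrict (Ioi 0) = 0 := by
    rw [integral_eq_zero_iff_of_nonneg (fun u => psi_kernel_nonneg _) hk_int] at hIz
    refine ae_eq_bot.mp (eventually_false_iff_eq_bot.mp ?_)
    filter_upwards [hIz, ae_restrict_mem measurableSet_Ioi] with u hu hu0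
    have := add_one_lt_exp (x := -(z * u)) (by nlinarith [mem_Ioi.mp hu0])
    simp only [Pi.zero_apply] at hu
    linarith
  funext x
  simp [psi, hm0, hb0, hσ0]

end Mechanisms

lemma integrableOn_Ioo_of_continuousOn_Ioi {g : ℝ → ℝ} {a : ℝ} (hg : ContinuousOn g (Ioi 0))
    (ha : 0 < a) (hga : IntegrableOn g (Ioo 0 a)) (b : ℝ) : IntegrableOn g (Ioo 0 b) := by
  refine (hga.union ((hg.mono fun x hx => ha.trans_le hx.1).integrableOn_Icc (b := b))).mono_set ?_
  intro x hx
  rcases lt_or_ge x a with h | h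
  · exact Or.inl ⟨hx.1, h⟩
  · exact Or.inr ⟨h, hx.2.le⟩

lemma setIntegral_Ioi_comp_add_right {E : Type*} [NormedAddCommGroup E] [NormedSpace ℝ E]
    (h : ℝ → E) (a t : ℝ) : ∫ s in Ioi a, h (s + t) = ∫ u in Ioi (a + t), h u := by
  simpa [preimage_add_const_Ioi] using
    (measurePreserving_add_right volume t).setIntegral_preimage_emb
      (measurableEmbedding_addRight t) h (Ioi (a + t))

lemma integrableOn_Ioi_comp_add_right_iff {E : Type*} [NormedAddCommGroup E] (h : ℝ → E)
    (a t : ℝ) : IntegrableOn (fun s => h (s + t)) (Ioi a) ↔ IntegrableOn h (Ioi (a + t)) := by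
  simpa [preimage_add_const_Ioi, Function.comp_def] using
    (measurePreserving_add_right volume t).integrableOn_comp_preimage
      (measurableEmbedding_addRight t) (f := h) (s := Ioi (a + t))

section InverseOfIntegral

variable {ψ : ℝ → ℝ}

lemma intervalIntegrable_inv_of_pos (hψ : ContinuousOn ψ (Ioi 0))
    (hpos : ∀ z ∈ Ioi 0, 0 < ψ z)
    {a b : ℝ} (ha : 0 < a) (hb : 0 < b) : IntervalIntegrable (fun z => (ψ z)⁻¹) volume a b :=
  ((hψ.inv₀ fun z hz => (hpos z hz).ne').mono fun _ hx =>
    (lt_min ha hb).trans_le hx.1).intervalIntegrable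

lemma integrableOn_Ioi_inv_of_pos (hψ : ContinuousOn ψ (Ioi 0)) (hpos : ∀ z ∈ Ioi 0, 0 < ψ z)
    {a b : ℝ} (ha : 0 < a) (hb : 0 < b) (hib : IntegrableOn (fun z => (ψ z)⁻¹) (Ioi b)) :
    IntegrableOn (fun z => (ψ z)⁻¹) (Ioi a) := by
  rcases le_total a b with hab | hab
  · rw [← Ioc_union_Ioi_eq_Ioi hab]
    exact (intervalIntegrable_inv_of_pos hψ hpos ha hb).1.union hib
  · exact hib.mono_set (Ioi_subset_Ioi hab)

lemma strictAntiOn_intervalIntegral_inv (hψ : ContinuousOn ψ (Ioi 0))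
    (hpos : ∀ z ∈ Ioi 0, 0 < ψ z) {lam : ℝ} (hlam : 0 < lam) :
    StrictAntiOn (fun r => ∫ z in r..lam, (ψ z)⁻¹) (Ioi 0) := by
  intro a ha b hb hab
  have hsplit := intervalIntegral.integral_add_adjacent_intervals
    (intervalIntegrable_inv_of_pos hψ hpos ha hb) (intervalIntegrable_inv_of_pos hψ hpos hb hlam)
  have hpos_ab : 0 < ∫ z in a..b, (ψ z)⁻¹ :=
    intervalIntegral.intervalIntegral_pos_of_pos_on (intervalIntegrable_inv_of_pos hψ hpos ha hb)
      (fun x hx => inv_pos.mpr (hpos x (lt_trans ha hx.1))) hab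
  simp only
  linarith

lemma eq_of_setIntegral_Ioi_inv_eq (hψ : ContinuousOn ψ (Ioi 0))
    (hpos : ∀ z ∈ Ioi 0, 0 < ψ z)
    {a b : ℝ} (ha : 0 < a) (hb : 0 < b) (hib : IntegrableOn (fun z => (ψ z)⁻¹) (Ioi b))
    (h : ∫ z in Ioi a, (ψ z)⁻¹ = ∫ z in Ioi b, (ψ z)⁻¹) : a = b := by
  have hab := intervalIntegral.integral_Ioi_sub_Ioi'
    (integrableOn_Ioi_inv_of_pos hψ hpos ha hb hib) hib
  rw [h, sub_self] at hab
  refine (strictAntiOn_intervalIntegral_inv hψ hpos hb).injOn ha hb ?_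
  simp only [intervalIntegral.integral_same, ← hab]

/-- Change of variables `s = ∫_r^λ dz/ψ(z)`, whose inverse is `w`. -/
lemma integrableOn_comp_and_setIntegral_comp_eq (hψ : ContinuousOn ψ (Ioi 0))
    (hpos : ∀ z ∈ Ioi 0, 0 < ψ z) {lam : ℝ} (hlam : 0 < lam) {w : ℝ → ℝ}
    (hw : ∀ s ≥ 0, w s ∈ Ioc 0 lam ∧ ∫ z in w s..lam, (ψ z)⁻¹ = s) {g : ℝ → ℝ}
    (hg : IntegrableOn (fun r => g r / ψ r) (Ioo 0 lam)) :
    IntegrableOn (fun s => g (w s)) (Ioi 0) ∧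
      ∫ s in Ioi 0, g (w s) = ∫ r in Ioo 0 lam, g r / ψ r := by
  set G : ℝ → ℝ := fun r => ∫ z in r..lam, (ψ z)⁻¹
  have hinj : InjOn G (Ioc 0 lam) :=
    (strictAntiOn_intervalIntegral_inv hψ hpos hlam).injOn.mono fun _ hx => hx.1
  have hderiv : ∀ x ∈ Ioo 0 lam, HasDerivWithinAt G (-(ψ x)⁻¹) (Ioo 0 lam) x := fun x hx =>
    (intervalIntegral.integral_hasDerivAt_left (intervalIntegrable_inv_of_pos hψ hpos hx.1 hlam)
      ((hψ.inv₀ fun z hz => (hpos z hz).ne').stronglyMeasurableAtFilter isOpen_Ioi x hx.1)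
      ((hψ.inv₀ fun z hz => (hpos z hz).ne').continuousAt (Ioi_mem_nhds hx.1))).hasDerivWithinAt
  have hG_pos : ∀ r ∈ Ioo 0 lam, 0 < G r := fun r hr => by
    simpa [G] using strictAntiOn_intervalIntegral_inv hψ hpos hlam hr.1 hlam hr.2
  have himage : G '' Ioo 0 lam = Ioi 0 := by
    refine Subset.antisymm (image_subset_iff.mpr hG_pos) fun s (hs : 0 < s) => ?_
    obtain ⟨⟨hw0, hwlam⟩, hGw⟩ := hw s hs.le
    refine ⟨w s, ⟨hw0, lt_of_le_of_ne hwlam fun h => ?_⟩, hGw⟩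
    simp [h] at hGw
    exact hs.ne hGw
  have hcomp : EqOn (fun r => |-(ψ r)⁻¹| • g (w (G r))) (fun r => g r / ψ r) (Ioo 0 lam) :=
    fun r hr => by
      have hwG : w (G r) = r := hinj (hw _ (hG_pos r hr).le).1 (Ioo_subset_Ioc_self hr)
        (hw _ (hG_pos r hr).le).2
      simp only
      rw [hwG, abs_neg, abs_of_pos (inv_pos.mpr (hpos r hr.1)), smul_eq_mul, div_eq_inv_mul]
  have hmono := hinj.mono Ioo_subset_Ioc_self
  have hint := integrableOn_image_iff_integrableOn_abs_deriv_smul measurableSet_Ioo hderiv hmono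
    (g ∘ w)
  have heq := integral_image_eq_integral_abs_deriv_smul measurableSet_Ioo hderiv hmono (g ∘ w)
  rw [himage] at hint heq
  exact ⟨hint.mpr (hg.congr_fun hcomp.symm measurableSet_Ioo),
    heq.trans (setIntegral_congr_fun measurableSet_Ioo hcomp)⟩

/-- The flow property `v_s(c(t)) = c(t + s)`. -/
lemma eq_apply_add_of_setIntegral_Ioi_inv (hψ : ContinuousOn ψ (Ioi 0))
    (hpos : ∀ z ∈ Ioi 0, 0 < ψ z) {c : ℝ → ℝ}
    (hc : ∀ t > 0, 0 < c t ∧ ∫ z in Ioi (c t), (ψ z)⁻¹ = t) {t : ℝ} (ht : 0 < t)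
    {w : ℝ → ℝ} (hw : ∀ s ≥ 0, w s ∈ Ioc 0 (c t) ∧ ∫ z in w s..c t, (ψ z)⁻¹ = s)
    {s : ℝ} (hs : 0 < s) :
    w s = c (s + t) := by
  have hint : ∀ u > 0, IntegrableOn (fun z => (ψ z)⁻¹) (Ioi (c u)) := fun u hu =>
    Integrable.of_integral_ne_zero (by rw [(hc u hu).2]; exact hu.ne')
  obtain ⟨⟨hws, hwt⟩, hGw⟩ := hw s hs.le
  have htail : ∫ z in Ioi (w s), (ψ z)⁻¹ = s + t := by
    rw [← intervalIntegral.integral_interval_add_Ioi'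
      (intervalIntegrable_inv_of_pos hψ hpos hws (hc t ht).1) (hint t ht), hGw, (hc t ht).2]
  refine eq_of_setIntegral_Ioi_inv_eq hψ hpos hws (hc _ (by positivity)).1
    (hint _ (by positivity)) ?_
  rw [htail, (hc _ (by positivity)).2]

end InverseOfIntegral

theorem tmrca_distribution_identity_general (b σ β : ℝ) (m n : Measure ℝ)
    (hb : 0 ≤ b) (hσ : 0 ≤ σ)
    (hm : IntegrableOn (fun u => min u (u ^ 2)) (Ioi 0) m)
    (hn : IntegrableOn (fun u => min 1 u) (Ioi 0) n)
    (hA2 : condA2 b σ β m n)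
    (v : ℝ → ℝ → ℝ) (hv : IsCumulant b σ m v)
    (c : ℝ → ℝ) (hc : IsExtinctionRate b σ m c) :
    ∀ t > (0 : ℝ),
      IntegrableOn (fun u => Fim β n (c u)) (Ioi t) ∧
      IntegrableOn (fun s => Fim β n (v s (c t))) (Ioi 0) ∧
      IntegrableOn (fun r => Fim β n r / psi b σ m r) (Ioo 0 (c t)) ∧
      (∫ u in Ioi t, Fim β n (c u)) = (∫ s in Ioi (0 : ℝ), Fim β n (v s (c t))) ∧
      (∫ s in Ioi (0 : ℝ), Fim β n (v s (c t))) =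
        ∫ r in Ioo (0 : ℝ) (c t), Fim β n r / psi b σ m r := by
  intro t ht
  have hψ_ne : psi b σ m ≠ 0 := fun h => by simpa [h] using (hc 1 one_pos).2
  have hpos : ∀ z ∈ Ioi 0, 0 < psi b σ m z := fun z hz => psi_pos hb hσ hm hψ_ne hz
  have hcont := continuousOn_psi (b := b) (σ := σ) hm
  have hflow : EqOn (fun s => Fim β n (v s (c t))) (fun s => Fim β n (c (s + t))) (Ioi 0) :=
    fun s hs => congrArg (Fim β n) <|
      eq_apply_add_of_setIntegral_Ioi_inv hcont hpos hc ht (hv (c t) (hc t ht).1) hs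
  obtain ⟨lam, hlam, hA2⟩ := hA2
  have hFψ : IntegrableOn (fun r => Fim β n r / psi b σ m r) (Ioo 0 (c t)) :=
    integrableOn_Ioo_of_continuousOn_Ioi
      ((continuousOn_Fim hn).div hcont fun z hz => (hpos z hz).ne') hlam hA2 _
  obtain ⟨hint, heq⟩ := integrableOn_comp_and_setIntegral_comp_eq hcont hpos (hc t ht).1
    (hv (c t) (hc t ht).1) hFψ
  have hshift_int := integrableOn_Ioi_comp_add_right_iff (fun u => Fim β n (c u)) 0 t
  have hshift_eq := setIntegral_Ioi_comp_add_right (fun u => Fim β n (c u)) 0 t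
  rw [zero_add] at hshift_int hshift_eq
  refine ⟨hshift_int.mp (hint.congr_fun hflow measurableSet_Ioi), hint, hFψ, ?_, heq⟩
  rw [← hshift_eq, setIntegral_congr_fun measurableSet_Ioi hflow]

theorem tmrca_distribution_identity (b σ β : ℝ) (m n : Measure ℝ)
    (hb : 0 ≤ b) (hσ : 0 ≤ σ) (hβ : 0 ≤ β)
    (hm : IntegrableOn (fun u => min u (u ^ 2)) (Ioi 0) m)
    (hn : IntegrableOn (fun u => min 1 u) (Ioi 0) n)
    (hA1 : IntegrableOn (fun z => (psi b σ m z)⁻¹) (Ioi 1))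
    (hA2 : condA2 b σ β m n) (hA3 : condA3 σ m)
    (v : ℝ → ℝ → ℝ) (hv : IsCumulant b σ m v)
    (c : ℝ → ℝ) (hc : IsExtinctionRate b σ m c) :
    ∀ t > (0 : ℝ),
      IntegrableOn (fun u => Fim β n (c u)) (Ioi t) ∧
      IntegrableOn (fun s => Fim β n (v s (c t))) (Ioi 0) ∧
      IntegrableOn (fun r => Fim β n r / psi b σ m r) (Ioo 0 (c t)) ∧
      (∫ u in Ioi t, Fim β n (c u)) = (∫ s in Ioi (0 : ℝ), Fim β n (v s (c t))) ∧
      (∫ s in Ioi (0 : ℝ), Fim β n (v s (c t))) =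
        ∫ r in Ioo (0 : ℝ) (c t), Fim β n r / psi b σ m r :=
  tmrca_distribution_identity_general b σ β m n hb hσ hm hn hA2 v hv c hc
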